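/- Filter.Tendsto (fun n : ℕ => (((∑ t in Finset.range (n - Nat.sqrt n + 1), (n - Nat.sqrt n).choose (2*t) * catalan t : ℕ) : ℝ) / Real.sqrt (∑ t in Finset.range (2*n+1), (2*n).choose (2*t) * catalan t : ℕ)) ^ ((n : ℝ)⁻¹)) Filter.atTop (nhds 1); i.e. the n-th root of the gap-ratio (the representation-gap lower bound Motz(n−⌊√n⌋) divided by the square root of |Mo_n| = Motz(2n)) converges to 1, so the gap-ratio does not decay exponentially. -/

import Mathlib

/-!
Since `catalan t ≤ 4 ^ t ≤ (2t+1)(t+1) catalan t`, the Motzkin number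
`M m = ∑ₜ C(m,2t) catalan t` agrees up to polynomial factors with the even half
`∑ₜ C(m,2t) 4 ^ t` of the binomial sum `∑ₖ C(m,k) 2 ^ k = 3 ^ m`, and each odd term of that sum
is at most `2m` times the even term before it. Hence `3 ^ m ≤ (2m+1) ^ 3 M m` and `M m ≤ 3 ^ m`.
With `s = ⌊√n⌋`, the gap-ratio `M(n-s) / √M(2n)` then lies between `c⁻¹` and `c` for
`c = 3 ^ s (4n+1) ^ 3`, and `log c = O(√n) = o(n)`.
-/

open Finset Filter Real Topology

def motzkin (m : ℕ) : ℕ := ∑ t ∈ range (m + 1), m.choose (2 * t) * catalan t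

lemma sum_range_two_mul {M : Type*} [AddCommMonoid M] (f : ℕ → M) (N : ℕ) :
    ∑ k ∈ range (2 * N), f k = ∑ t ∈ range N, (f (2 * t) + f (2 * t + 1)) := by
  induction N with
  | zero => simp
  | succ N ih =>
    rw [mul_add, mul_one, sum_range_succ, sum_range_succ, sum_range_succ, ih, add_assoc]

lemma sum_range_choose_mul_two_pow {m N : ℕ} (h : m < N) :
    ∑ k ∈ range N, m.choose k * 2 ^ k = 3 ^ m := by
  rw [← sum_subset (range_subset_range.2 h) fun k _ hk => by
    rw [Nat.choose_eq_zero_of_lt (by simpa using hk), zero_mul]]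
  have h3 := add_pow (2 : ℕ) 1 m
  simp only [one_pow, mul_one] at h3
  rw [show (3 : ℕ) ^ m = (2 + 1) ^ m from rfl, h3]
  exact sum_congr rfl fun k _ => mul_comm _ _

lemma catalan_le_four_pow (t : ℕ) : catalan t ≤ 4 ^ t :=
  calc catalan t ≤ (t + 1) * catalan t := Nat.le_mul_of_pos_left _ t.succ_pos
    _ = t.centralBinom := succ_mul_catalan_eq_centralBinom t
    _ ≤ 4 ^ t := Nat.centralBinom_le_four_pow t

lemma four_pow_le_mul_catalan (t : ℕ) : 4 ^ t ≤ (2 * t + 1) * ((t + 1) * catalan t) := by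
  rw [succ_mul_catalan_eq_centralBinom, Nat.centralBinom_eq_two_mul_choose]
  exact Nat.four_pow_le_two_mul_add_one_mul_central_binom t

lemma choose_succ_le_mul_choose (m k : ℕ) : m.choose (k + 1) ≤ m * m.choose k :=
  calc m.choose (k + 1) ≤ m.choose (k + 1) * (k + 1) := Nat.le_mul_of_pos_right _ k.succ_pos
    _ = m.choose k * (m - k) := Nat.choose_succ_right_eq m k
    _ ≤ m * m.choose k := by rw [mul_comm]; exact Nat.mul_le_mul_right _ (Nat.sub_le m k)

lemma motzkin_pos (m : ℕ) : 0 < motzkin m :=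
  sum_pos' (fun _ _ => Nat.zero_le _) ⟨0, by simp, by simp [catalan_zero]⟩

lemma motzkin_le_three_pow (m : ℕ) : motzkin m ≤ 3 ^ m :=
  calc motzkin m ≤ ∑ t ∈ range (m + 1), m.choose (2 * t) * 2 ^ (2 * t) := by
        unfold motzkin; gcongr with t; rw [pow_mul]; exact catalan_le_four_pow t
    _ ≤ ∑ t ∈ range (m + 1),
          (m.choose (2 * t) * 2 ^ (2 * t) + m.choose (2 * t + 1) * 2 ^ (2 * t + 1)) :=
        sum_le_sum fun t _ => Nat.le_add_right _ _
    _ = 3 ^ m := by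
        rw [← sum_range_two_mul (fun k => m.choose k * 2 ^ k),
          sum_range_choose_mul_two_pow (by omega)]

lemma choose_two_mul_mul_four_pow_le (m t : ℕ) :
    m.choose (2 * t) * 4 ^ t ≤ (m + 1) ^ 2 * (m.choose (2 * t) * catalan t) := by
  rcases lt_or_ge m (2 * t) with h | h
  · simp [Nat.choose_eq_zero_of_lt h]
  · calc m.choose (2 * t) * 4 ^ t ≤ m.choose (2 * t) * ((2 * t + 1) * ((t + 1) * catalan t)) :=
          Nat.mul_le_mul_left _ (four_pow_le_mul_catalan t)
      _ ≤ m.choose (2 * t) * ((m + 1) * ((m + 1) * catalan t)) := by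
          gcongr (_ * (?_ * (?_ * _))) <;> omega
      _ = (m + 1) ^ 2 * (m.choose (2 * t) * catalan t) := by ring

lemma three_pow_le_motzkin (m : ℕ) : 3 ^ m ≤ (2 * m + 1) ^ 3 * motzkin m :=
  calc 3 ^ m = ∑ t ∈ range (m + 1),
        (m.choose (2 * t) * 2 ^ (2 * t) + m.choose (2 * t + 1) * 2 ^ (2 * t + 1)) := by
        rw [← sum_range_two_mul (fun k => m.choose k * 2 ^ k),
          sum_range_choose_mul_two_pow (by omega)]
    _ ≤ ∑ t ∈ range (m + 1), (2 * m + 1) * (m.choose (2 * t) * 4 ^ t) := by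
        gcongr with t
        have hodd := choose_succ_le_mul_choose m (2 * t)
        calc _ ≤ m.choose (2 * t) * 2 ^ (2 * t) + m * m.choose (2 * t) * 2 ^ (2 * t + 1) := by
              gcongr
          _ = _ := by rw [pow_succ, pow_mul]; ring
    _ ≤ ∑ t ∈ range (m + 1), (2 * m + 1) * ((m + 1) ^ 2 * (m.choose (2 * t) * catalan t)) :=
        sum_le_sum fun t _ => Nat.mul_le_mul_left _ (choose_two_mul_mul_four_pow_le m t)
    _ ≤ (2 * m + 1) ^ 3 * motzkin m := by
        have hpoly : (2 * m + 1) * (m + 1) ^ 2 ≤ (2 * m + 1) ^ 3 := by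
          rw [pow_succ' _ 2]; gcongr; omega
        rw [motzkin, mul_sum]
        exact sum_le_sum fun t _ => by rw [← mul_assoc]; exact Nat.mul_le_mul_right _ hpoly

lemma three_pow_le_mul_motzkin_sub {n k : ℕ} (hk : k ≤ n) :
    3 ^ n ≤ 3 ^ k * ((2 * n + 1) ^ 3 * motzkin (n - k)) :=
  calc 3 ^ n = 3 ^ k * 3 ^ (n - k) := by rw [← pow_add, Nat.add_sub_cancel' hk]
    _ ≤ 3 ^ k * ((2 * (n - k) + 1) ^ 3 * motzkin (n - k)) := by gcongr; exact three_pow_le_motzkin _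
    _ ≤ 3 ^ k * ((2 * n + 1) ^ 3 * motzkin (n - k)) := by gcongr; omega

lemma motzkin_two_mul_le_sq (n : ℕ) :
    motzkin (2 * n) ≤ (3 ^ Nat.sqrt n * (4 * n + 1) ^ 3 * motzkin (n - Nat.sqrt n)) ^ 2 :=
  calc motzkin (2 * n) ≤ (3 ^ n) ^ 2 := by rw [← pow_mul, mul_comm]; exact motzkin_le_three_pow _
    _ ≤ (3 ^ Nat.sqrt n * ((2 * n + 1) ^ 3 * motzkin (n - Nat.sqrt n))) ^ 2 := by
        gcongr; exact three_pow_le_mul_motzkin_sub (Nat.sqrt_le_self n)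
    _ ≤ (3 ^ Nat.sqrt n * (4 * n + 1) ^ 3 * motzkin (n - Nat.sqrt n)) ^ 2 := by
        rw [mul_assoc]; gcongr; omega

lemma motzkin_sub_natSqrt_sq_le (n : ℕ) :
    motzkin (n - Nat.sqrt n) ^ 2 ≤ (3 ^ Nat.sqrt n * (4 * n + 1) ^ 3) ^ 2 * motzkin (2 * n) :=
  calc motzkin (n - Nat.sqrt n) ^ 2 ≤ (3 ^ n) ^ 2 := by
        gcongr; exact (motzkin_le_three_pow _).trans (Nat.pow_le_pow_right (by norm_num) (by omega))
    _ = 3 ^ (2 * n) := by rw [← pow_mul, mul_comm]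
    _ ≤ (4 * n + 1) ^ 3 * motzkin (2 * n) := by
        rw [show 4 * n = 2 * (2 * n) by ring]; exact three_pow_le_motzkin (2 * n)
    _ ≤ (3 ^ Nat.sqrt n * (4 * n + 1) ^ 3) ^ 2 * motzkin (2 * n) := by
        refine Nat.mul_le_mul_right _ ?_
        exact (Nat.le_mul_of_pos_left _ (Nat.pow_pos three_pos)).trans
          (Nat.le_self_pow two_ne_zero _)

lemma inv_le_div_sqrt {c u v : ℝ} (hc : 0 < c) (hu : 0 ≤ u) (hv : 0 < v) (h : v ≤ (c * u) ^ 2) :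
    c⁻¹ ≤ u / √v := by
  rw [le_div_iff₀ (sqrt_pos.2 hv), inv_mul_le_iff₀ hc]
  exact (sqrt_le_left (by positivity)).2 h

lemma div_sqrt_le {c u v : ℝ} (hc : 0 ≤ c) (h : u ^ 2 ≤ c ^ 2 * v) : u / √v ≤ c := by
  rcases le_or_gt v 0 with hv | hv
  · rwa [sqrt_eq_zero'.2 hv, div_zero]
  rw [div_le_iff₀ (sqrt_pos.2 hv)]
  calc u ≤ |u| := le_abs_self u
    _ ≤ √(c ^ 2 * v) := abs_le_sqrt h
    _ = c * √v := by rw [sqrt_mul (sq_nonneg c), sqrt_sq hc]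

lemma tendsto_rpow_inv_natCast_of_tendsto_log_div {c : ℕ → ℝ} (hc : ∀ n, 0 < c n)
    (h : Tendsto (fun n : ℕ => log (c n) / n) atTop (𝓝 0)) :
    Tendsto (fun n : ℕ => c n ^ (n : ℝ)⁻¹) atTop (𝓝 1) := by
  simpa [rpow_def_of_pos (hc _), div_eq_mul_inv, Function.comp_def] using
    tendsto_exp_nhds_zero_nhds_one.comp h

lemma tendsto_rpow_inv_natCast_of_inv_le_of_le {c x : ℕ → ℝ} (hc₀ : ∀ n, 0 ≤ c n)
    (hc : Tendsto (fun n : ℕ => c n ^ (n : ℝ)⁻¹) atTop (𝓝 1))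
    (hlow : ∀ n, (c n)⁻¹ ≤ x n) (hup : ∀ n, x n ≤ c n) :
    Tendsto (fun n : ℕ => x n ^ (n : ℝ)⁻¹) atTop (𝓝 1) := by
  have hc_inv : Tendsto (fun n : ℕ => (c n)⁻¹ ^ (n : ℝ)⁻¹) atTop (𝓝 1) := by
    simpa [inv_rpow (hc₀ _)] using hc.inv₀ one_ne_zero
  refine tendsto_of_tendsto_of_tendsto_of_le_of_le hc_inv hc (fun n => ?_) (fun n => ?_)
  · exact rpow_le_rpow (inv_nonneg.2 (hc₀ n)) (hlow n) (by positivity)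
  · exact rpow_le_rpow ((inv_nonneg.2 (hc₀ n)).trans (hlow n)) (hup n) (by positivity)

lemma tendsto_natSqrt_div_natCast : Tendsto (fun n : ℕ => (Nat.sqrt n : ℝ) / n) atTop (𝓝 0) := by
  have h : Tendsto (fun n : ℕ => (√(n : ℝ))⁻¹) atTop (𝓝 0) :=
    tendsto_inv_atTop_zero.comp (tendsto_sqrt_atTop.comp tendsto_natCast_atTop_atTop)
  refine squeeze_zero (fun n => by positivity) (fun n => ?_) h
  calc (Nat.sqrt n : ℝ) / n ≤ √(n : ℝ) / n := by gcongr; exact nat_sqrt_le_real_sqrt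
    _ = (√(n : ℝ))⁻¹ := by rw [sqrt_div_self', one_div]

lemma tendsto_log_mul_natCast_add_div {a : ℝ} (ha : 0 < a) (b : ℝ) :
    Tendsto (fun n : ℕ => log (a * n + b) / n) atTop (𝓝 0) := by
  have hlin : Tendsto (fun n : ℕ => a * n + b) atTop atTop :=
    tendsto_atTop_add_const_right _ b (tendsto_natCast_atTop_atTop.const_mul_atTop ha)
  refine ((tendsto_pow_log_div_mul_add_atTop a⁻¹ (-(b / a)) 1 (inv_ne_zero ha.ne')).comp hlin).congr
    fun n => ?_
  simp only [Function.comp_apply, pow_one]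
  congr 1
  field_simp
  ring

lemma tendsto_three_pow_natSqrt_mul_rpow_inv :
    Tendsto (fun n : ℕ => ((3 : ℝ) ^ Nat.sqrt n * (4 * n + 1) ^ 3) ^ (n : ℝ)⁻¹) atTop (𝓝 1) := by
  refine tendsto_rpow_inv_natCast_of_tendsto_log_div (fun n => by positivity) ?_
  have h := (tendsto_natSqrt_div_natCast.const_mul (log 3)).add
    ((tendsto_log_mul_natCast_add_div (by norm_num : (0 : ℝ) < 4) 1).const_mul 3)
  rw [mul_zero, mul_zero, add_zero] at h
  refine h.congr fun n => ?_
  rw [log_mul (by positivity) (by positivity), log_pow, log_pow]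
  ring

/-- The n-th root of the gap-ratio Motz(n−⌊√n⌋)/√(Motz(2n)) converges to 1. -/
theorem gap_ratio_root_tendsto_one :
    Filter.Tendsto
      (fun n : ℕ =>
        (((∑ t ∈ Finset.range (n - Nat.sqrt n + 1),
              (n - Nat.sqrt n).choose (2*t) * catalan t : ℕ) : ℝ) /
          Real.sqrt (∑ t ∈ Finset.range (2*n+1), (2*n).choose (2*t) * catalan t : ℕ))
          ^ ((n : ℝ)⁻¹))
      Filter.atTop (nhds 1) := by
  change Tendsto (fun n : ℕ => ((motzkin (n - Nat.sqrt n) : ℝ) / √(motzkin (2 * n))) ^ (n : ℝ)⁻¹)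
    atTop (𝓝 1)
  refine tendsto_rpow_inv_natCast_of_inv_le_of_le (fun n => by positivity)
    tendsto_three_pow_natSqrt_mul_rpow_inv (fun n => ?_) (fun n => ?_)
  · refine inv_le_div_sqrt (by positivity) (Nat.cast_nonneg _) (by exact_mod_cast motzkin_pos _) ?_
    exact_mod_cast motzkin_two_mul_le_sq n
  · exact div_sqrt_le (by positivity) (by exact_mod_cast motzkin_sub_natSqrt_sq_le n)
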